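/- arXiv:1911.06625 — 6 statements merged into one kernel-verified Lean document; each statement's English description precedes it below -/
import Mathlib

section
/- Let (M; ∨, ∧, ⊕, ⊖, 0) be a wEMV-algebra. Then (M; ⊕, 0) is an ordered monoid with respect to the lattice order, i.e., x ≤ y implies x ⊕ z ≤ y ⊕ z for every z ∈ M; moreover, for all x, y ∈ M, x ≤ y if and only if there exists a ∈ M such that y = x ⊕ a. -/
universe u

class WEMV (M : Type u) extends DistribLattice M, Zero M where
  oplus : M → M → M
  ominus : M → M → M
  zero_le : ∀ x : M, 0 ≤ x
  oplus_comm : ∀ x y : M, oplus x y = oplus y x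
  oplus_assoc : ∀ x y z : M, oplus (oplus x y) z = oplus x (oplus y z)
  oplus_zero : ∀ x : M, oplus x 0 = x
  ominus_oplus_le : ∀ x y : M, ominus (oplus x y) x ≤ y
  oplus_ominus : ∀ x y : M, oplus x (ominus y x) = x ⊔ y
  ominus_inf : ∀ x y : M, ominus x (x ⊓ y) = ominus x y
  ominus_ominus : ∀ x z : M, ominus z (ominus z x) = x ⊓ z
  ominus_sup : ∀ x y z : M, ominus z (x ⊔ y) = ominus z x ⊓ ominus z y
  inf_ominus : ∀ x y z : M, ominus (x ⊓ y) z = ominus x z ⊓ ominus y z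
  ominus_oplus_assoc : ∀ x y z : M, ominus x (oplus y z) = ominus (ominus x y) z
  oplus_sup : ∀ x y z : M, oplus x (y ⊔ z) = oplus x y ⊔ oplus x z

open WEMV

namespace WEMV

variable {M : Type u} [WEMV M]

theorem oplus_le_oplus_right {x y : M} (h : x ≤ y) (z : M) : oplus x z ≤ oplus y z := by
  rw [oplus_comm x z, oplus_comm y z]
  exact le_of_sup_eq <| by rw [← oplus_sup, sup_eq_right.mpr h]

theorem le_self_oplus (x a : M) : x ≤ oplus x a :=
  calc x = oplus 0 x := by rw [oplus_comm, oplus_zero]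
    _ ≤ oplus a x := oplus_le_oplus_right (zero_le a) x
    _ = oplus x a := oplus_comm a x

theorem exists_oplus_eq_of_le {x y : M} (h : x ≤ y) : ∃ a, y = oplus x a :=
  ⟨ominus y x, by rw [oplus_ominus, sup_eq_right.mpr h]⟩

theorem le_iff_exists_oplus (x y : M) : x ≤ y ↔ ∃ a, y = oplus x a := by
  refine ⟨exists_oplus_eq_of_le, ?_⟩
  rintro ⟨a, rfl⟩
  exact le_self_oplus x a

end WEMV

theorem stmt0 {M : Type u} [WEMV M] :
    (∀ x y z : M, x ≤ y → oplus x z ≤ oplus y z) ∧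
    (∀ x y : M, x ≤ y ↔ ∃ a : M, y = oplus x a) :=
  ⟨fun _ _ z h => oplus_le_oplus_right h z, le_iff_exists_oplus⟩
end

section
/- Let (M; ∨, ∧, ⊕, ⊖, 0) be a wEMV-algebra. For all x, z ∈ M, the element z ⊖ x is the minimum of the set {t ∈ M : t ≤ z and t ⊕ (z ∧ x) = z}; in particular, if x ≤ z, then z ⊖ x is the minimum of {t ∈ M : t ≤ z and x ⊕ t = z}. -/
/-! `z ⊖ x` solves `t ⊕ (z ⊓ x) = z` by axiom (iv) together with (v), and any solution `t` bounds it
from below by axiom (iii): `z ⊖ x = z ⊖ (z ⊓ x) = (t ⊕ (z ⊓ x)) ⊖ (z ⊓ x) ≤ t`. -/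

universe u

open WEMV

namespace WEMV

variable {M : Type u} [WEMV M]

theorem ominus_le_ominus_right {a b : M} (hab : a ≤ b) (z : M) : ominus z b ≤ ominus z a := by
  rw [← sup_eq_right.mpr hab, ominus_sup]
  exact inf_le_left

theorem ominus_zero_le (z : M) : ominus z 0 ≤ z := by
  simpa only [oplus_comm (0 : M), oplus_zero] using ominus_oplus_le (0 : M) z

theorem ominus_le_self (z a : M) : ominus z a ≤ z :=
  (ominus_le_ominus_right (WEMV.zero_le a) z).trans (ominus_zero_le z)

theorem ominus_le_of_oplus_eq {t y z : M} (h : oplus t y = z) : ominus z y ≤ t := by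
  simpa only [oplus_comm y, h] using ominus_oplus_le y t

theorem ominus_oplus_inf (z x : M) : oplus (ominus z x) (z ⊓ x) = z := by
  rw [oplus_comm, ← ominus_inf, oplus_ominus, sup_eq_right.mpr inf_le_left]

theorem isLeast_ominus (x z : M) :
    IsLeast {t : M | t ≤ z ∧ oplus t (z ⊓ x) = z} (ominus z x) := by
  refine ⟨⟨ominus_le_self z x, ominus_oplus_inf z x⟩, ?_⟩
  rintro t ⟨-, ht⟩
  rw [← ominus_inf]
  exact ominus_le_of_oplus_eq ht

end WEMV

theorem stmt1 {M : Type u} [WEMV M] (x z : M) :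
    IsLeast {t : M | t ≤ z ∧ oplus t (z ⊓ x) = z} (ominus z x) ∧
    (x ≤ z → IsLeast {t : M | t ≤ z ∧ oplus x t = z} (ominus z x)) := by
  refine ⟨isLeast_ominus x z, fun hxz => ?_⟩
  have hsets : {t : M | t ≤ z ∧ oplus x t = z} = {t : M | t ≤ z ∧ oplus t (z ⊓ x) = z} := by
    simp only [inf_eq_right.mpr hxz, oplus_comm x]
  rw [hsets]
  exact isLeast_ominus x z
end

section
/- Let (M; ∨, ∧, ⊕, ⊖, 0) be a wEMV-algebra. For all x, y, z ∈ M, z ≤ x ⊕ y if and only if z ⊖ x ≤ y. -/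
universe u

open WEMV

namespace WEMV

variable {M : Type u} [WEMV M]

theorem oplus_monotone (x : M) : Monotone (oplus x) := fun a b hab => by
  rw [← sup_eq_right.mpr hab, oplus_sup]
  exact le_sup_left

theorem ominus_monotone (x : M) : Monotone fun z => ominus z x := fun a b hab => by
  dsimp only
  rw [← inf_eq_left.mpr hab, inf_ominus]
  exact inf_le_right

theorem le_oplus_ominus (x z : M) : z ≤ oplus x (ominus z x) := by
  rw [oplus_ominus]
  exact le_sup_right

theorem gc_ominus_oplus (x : M) : GaloisConnection (fun z => ominus z x) (oplus x) :=
  GaloisConnection.monotone_intro (oplus_monotone x) (ominus_monotone x) (le_oplus_ominus x)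
    (ominus_oplus_le x)

end WEMV

theorem stmt2 {M : Type u} [WEMV M] (x y z : M) :
    z ≤ oplus x y ↔ ominus z x ≤ y :=
  (gc_ominus_oplus x z y).symm
end

section
/- Let (M; ∨, ∧, ⊕, ⊖, 0) be a wEMV-algebra and let a₁, …, aₙ (n ≥ 1) be mutually different atoms of M. Then a₁ ∨ ⋯ ∨ aₙ = a₁ ⊕ ⋯ ⊕ aₙ. -/
universe u

open WEMV

/-!
Distinct atoms meet in `0`, so the head atom of the list is disjoint from the join of the rest.
For disjoint `a` and `s`, axiom (v) gives `s ⊖ a = s ⊖ 0 = s`, hence axiom (iv) turns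
`a ⊕ s = a ⊕ (s ⊖ a)` into `a ∨ s`; induction along the list finishes the proof.
-/

namespace WEMV

variable {M : Type u} [WEMV M]

lemma ominus_zero (x : M) : ominus x 0 = x := by
  have h := oplus_ominus (0 : M) x
  rwa [oplus_comm, oplus_zero, sup_eq_right.mpr (WEMV.zero_le x)] at h

lemma ominus_eq_self_of_inf_eq_zero {a s : M} (h : a ⊓ s = 0) : ominus s a = s := by
  rw [← ominus_inf, inf_comm, h, ominus_zero]

lemma oplus_eq_sup_of_inf_eq_zero {a s : M} (h : a ⊓ s = 0) : oplus a s = a ⊔ s := by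
  conv_lhs => rw [← ominus_eq_self_of_inf_eq_zero h]
  exact oplus_ominus a s

lemma inf_eq_zero_of_ne {a b : M} (ha : ∀ c : M, 0 < c → c ≤ a → c = a)
    (hb : ∀ c : M, 0 < c → c ≤ b → c = b) (hab : a ≠ b) : a ⊓ b = 0 := by
  by_contra h
  have hpos : 0 < a ⊓ b := lt_of_le_of_ne (WEMV.zero_le _) (Ne.symm h)
  exact hab ((ha _ hpos inf_le_left).symm.trans (hb _ hpos inf_le_right))

lemma inf_foldr_sup_eq_zero {a : M} {l : List M} (h : ∀ b ∈ l, a ⊓ b = 0) :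
    a ⊓ l.foldr (· ⊔ ·) 0 = 0 := by
  induction l with
  | nil => exact inf_eq_right.mpr (WEMV.zero_le a)
  | cons b t ih =>
    rw [List.forall_mem_cons] at h
    rw [List.foldr_cons, inf_sup_left, h.1, ih h.2, sup_idem]

end WEMV

theorem stmt3_general {M : Type u} [WEMV M] (l : List M)
    (hnd : l.Nodup)
    (hatom : ∀ x ∈ l, x ≠ 0 ∧ ∀ b : M, 0 < b → b ≤ x → b = x) :
    l.foldr (fun x y => x ⊔ y) 0 = l.foldr oplus 0 := by
  induction l with
  | nil => rfl
  | cons a t ih =>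
    rw [List.forall_mem_cons] at hatom
    obtain ⟨ha_notin, hnd⟩ := List.nodup_cons.mp hnd
    have hdisj : a ⊓ t.foldr (· ⊔ ·) 0 = 0 := inf_foldr_sup_eq_zero fun b hb =>
      inf_eq_zero_of_ne hatom.1.2 (hatom.2 b hb).2 (ne_of_mem_of_not_mem hb ha_notin).symm
    rw [List.foldr_cons, List.foldr_cons, ← ih hnd hatom.2, oplus_eq_sup_of_inf_eq_zero hdisj]

theorem stmt3 {M : Type u} [WEMV M] (l : List M) (hne : l ≠ [])
    (hnd : l.Nodup)
    (hatom : ∀ x ∈ l, x ≠ 0 ∧ ∀ b : M, 0 < b → b ≤ x → b = x) :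
    l.foldr (fun x y => x ⊔ y) 0 = l.foldr oplus 0 :=
  stmt3_general l hnd hatom
end

section
/- Let P be a prime ideal of a wEMV-algebra (M; ∨, ∧, ⊕, ⊖, 0). Then for all x, y ∈ M, x ⊖ y ∈ P or y ⊖ x ∈ P; equivalently, the quotient M/θ_P is linearly ordered. -/
universe u

open WEMV

/-! The meet of `x ⊖ y` and `y ⊖ x` is `(x ∧ y) ⊖ (x ∧ y) = 0`, which lies in every ideal;
primeness then puts one of the two differences into `P`. -/

namespace WEMV

variable {M : Type u} [WEMV M]

theorem ominus_self (x : M) : ominus x x = 0 :=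
  le_antisymm (by simpa only [oplus_zero] using ominus_oplus_le x 0) (zero_le _)

theorem ominus_inf_ominus_eq_zero (x y : M) : ominus x y ⊓ ominus y x = 0 := by
  rw [← ominus_inf x y, ← ominus_inf y x, inf_comm y x, ← inf_ominus, ominus_self]

theorem zero_mem_of_isLowerSet {P : Set M} (hP : IsLowerSet P) (hne : P.Nonempty) :
    (0 : M) ∈ P :=
  let ⟨a, ha⟩ := hne
  hP (zero_le a) ha

end WEMV

theorem stmt10_general {M : Type u} [WEMV M] (P : Set M)
    (hne : P.Nonempty)
    (hdown : ∀ x y : M, y ≤ x → x ∈ P → y ∈ P)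
    (hprime : ∀ x y : M, x ⊓ y ∈ P → x ∈ P ∨ y ∈ P) :
    ∀ x y : M, ominus x y ∈ P ∨ ominus y x ∈ P := by
  intro x y
  apply hprime
  rw [ominus_inf_ominus_eq_zero]
  exact zero_mem_of_isLowerSet (fun a b => hdown a b) hne

theorem stmt10 {M : Type u} [WEMV M] (P : Set M)
    (hne : P.Nonempty)
    (hdown : ∀ x y : M, y ≤ x → x ∈ P → y ∈ P)
    (hplus : ∀ x ∈ P, ∀ y ∈ P, oplus x y ∈ P)
    (hprime : ∀ x y : M, x ⊓ y ∈ P → x ∈ P ∨ y ∈ P) :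
    ∀ x y : M, ominus x y ∈ P ∨ ominus y x ∈ P :=
  stmt10_general P hne hdown hprime
end

section
/- Let (M; ∨, ∧, ⊕, ⊖, 0) be a linearly ordered wEMV-algebra. If a ∈ M is a nonzero idempotent element, then a is the greatest element of M (i.e., M = [0, a]). Consequently, every linearly ordered wEMV-algebra is either strict or has a top element. -/
universe u

open WEMV

/-!
If `a` is idempotent then `(x ⊖ a) ⊖ a = x ⊖ (a ⊕ a) = x ⊖ a`, and an element `y` with `y ⊖ a = y`
satisfies `a ∧ y = y ⊖ (y ⊖ a) = y ⊖ y = 0`; so `a` is disjoint from `x ⊖ a`, while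
`a ∨ x = a ⊕ (x ⊖ a) = a ∨ (x ⊖ a)`. In a chain, disjointness from a nonzero `a` forces `x ⊖ a = 0`,
hence `x ≤ a ∨ x = a ∨ (x ⊖ a) = a`.
-/

namespace WEMV

variable {M : Type u} [WEMV M]

theorem inf_eq_zero_of_ominus_eq_self {a y : M} (h : ominus y a = y) : a ⊓ y = 0 := by
  rw [← WEMV.ominus_ominus, h, ominus_self]

theorem ominus_ominus_of_idempotent {a : M} (ha : oplus a a = a) (x : M) :
    ominus (ominus x a) a = ominus x a := by
  rw [← ominus_oplus_assoc, ha]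

theorem inf_ominus_eq_zero_of_idempotent {a : M} (ha : oplus a a = a) (x : M) :
    a ⊓ ominus x a = 0 :=
  inf_eq_zero_of_ominus_eq_self (ominus_ominus_of_idempotent ha x)

theorem sup_ominus_eq_sup_of_idempotent {a : M} (ha : oplus a a = a) (x : M) :
    a ⊔ ominus x a = a ⊔ x := by
  rw [← oplus_ominus a (ominus x a), ominus_ominus_of_idempotent ha, oplus_ominus]

theorem le_of_idempotent_of_total (htot : ∀ x y : M, x ≤ y ∨ y ≤ x) {a : M} (ha0 : a ≠ 0)
    (ha : oplus a a = a) (x : M) : x ≤ a := by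
  have hdisj := inf_ominus_eq_zero_of_idempotent ha x
  have hzero : ominus x a = 0 := by
    rcases htot (ominus x a) a with h | h
    · rwa [inf_eq_right.mpr h] at hdisj
    · exact absurd (inf_eq_left.mpr h ▸ hdisj) ha0
  calc x ≤ a ⊔ x := le_sup_right
    _ = a := by rw [← sup_ominus_eq_sup_of_idempotent ha, hzero, sup_eq_left.mpr (WEMV.zero_le a)]

end WEMV

theorem stmt11 {M : Type u} [WEMV M] (htot : ∀ x y : M, x ≤ y ∨ y ≤ x) :
    (∀ a : M, a ≠ 0 → oplus a a = a → ∀ x : M, x ≤ a) ∧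
    ((∀ a : M, oplus a a = a → a = 0) ∨ ∃ t : M, ∀ x : M, x ≤ t) := by
  have htop : ∀ a : M, a ≠ 0 → oplus a a = a → ∀ x : M, x ≤ a :=
    fun _ ha0 ha => le_of_idempotent_of_total htot ha0 ha
  refine ⟨htop, or_iff_not_imp_left.mpr fun hstrict => ?_⟩
  push Not at hstrict
  obtain ⟨a, ha, ha0⟩ := hstrict
  exact ⟨a, htop a ha0 ha⟩
end
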